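/- arXiv:1701.04223 — 3 statements merged into one kernel-verified Lean document; each statement's English description precedes it below -/
import Mathlib

section
/- A triangle T of the idempotent completion Karoubi C belongs to the class Θ̃ if and only if its rotation T[1] = (T₂, T₃, T₁⟦1⟧; f₂, f₃, −f₁⟦1⟧) belongs to Θ̃. -/
/-!
Rotation commutes with direct sums of triangles (up to the canonical isomorphism
`(X ⊕ Y)⟦1⟧ ≅ X⟦1⟧ ⊕ Y⟦1⟧`) and with `(toKaroubi C).mapTriangle`, and it preserves distinguished
triangles of `C`. Hence if `T ⊕ T'` is the image of a distinguished triangle `S`, then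
`T.rotate ⊕ T'.rotate` is the image of `S.rotate`. Conversely, if `T.rotate ⊕ T'` is the image
of `S`, then `(T ⊕ T'.invRotate).rotate ≅ T.rotate ⊕ T'`, so inverse rotation shows that
`T ⊕ T'.invRotate` is the image of the distinguished triangle `S.invRotate`.
-/

open CategoryTheory CategoryTheory.Limits CategoryTheory.Pretriangulated
  CategoryTheory.Idempotents ZeroObject

variable (C : Type*) [Category C] [Preadditive C] [HasZeroObject C] [HasFiniteBiproducts C]
  [HasShift C ℤ] [∀ n : ℤ, (shiftFunctor C n).Additive] [Pretriangulated C]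

/-- The shift on the idempotent completion `Karoubi C` induced by the shift on `C`:
`(A, e)⟦n⟧ = (A⟦n⟧, e⟦n⟧)`. -/
noncomputable instance karoubiHasShift : HasShift (Karoubi C) ℤ :=
  HasShift.induced (toKaroubi C) ℤ
    (fun n => (functorExtension₂ C C).obj (shiftFunctor C n))
    (fun n => (functorExtension₂CompWhiskeringLeftToKaroubiIso C C).app (shiftFunctor C n))

/-- The functor `toKaroubi C` commutes with the shifts. -/
noncomputable instance toKaroubiCommShift : (toKaroubi C).CommShift ℤ :=
  Functor.CommShift.ofInduced (toKaroubi C) ℤ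
    (fun n => (functorExtension₂ C C).obj (shiftFunctor C n))
    (fun n => (functorExtension₂CompWhiskeringLeftToKaroubiIso C C).app (shiftFunctor C n))

noncomputable instance karoubiShiftAdditive (n : ℤ) :
    (shiftFunctor (Karoubi C) n).Additive := by
  change ((functorExtension₂ C C).obj (shiftFunctor C n)).Additive
  constructor
  intro X Y f g
  ext
  simp
  rfl

noncomputable instance : HasBinaryBiproducts (Karoubi C) :=
  hasBinaryBiproducts_of_finite_biproducts _

variable {C}

/-- The direct sum of two triangles: the triangle on the biproducts of the corresponding
objects, with the componentwise maps. -/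
noncomputable def triangleSum {D : Type*} [Category D] [Preadditive D] [HasBinaryBiproducts D]
    [HasShift D ℤ] (T T' : Triangle D) : Triangle D :=
  Triangle.mk (biprod.map T.mor₁ T'.mor₁) (biprod.map T.mor₂ T'.mor₂)
    (biprod.desc (T.mor₃ ≫ (biprod.inl : T.obj₁ ⟶ T.obj₁ ⊞ T'.obj₁)⟦(1:ℤ)⟧')
      (T'.mor₃ ≫ (biprod.inr : T'.obj₁ ⟶ T.obj₁ ⊞ T'.obj₁)⟦(1:ℤ)⟧'))

variable (C)

/-- The class `Θ̃` of triangles of `Karoubi C`: a triangle `T` belongs to `Θ̃` if there is a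
triangle `T'` of `Karoubi C` such that `T ⊕ T'` is isomorphic to the image under
`(toKaroubi C).mapTriangle` of a distinguished triangle of `C`. -/
noncomputable def thetaTilde : Set (Triangle (Karoubi C)) :=
  {T | ∃ (T' : Triangle (Karoubi C)) (S : Triangle C),
    (S ∈ distTriang C) ∧ Nonempty (triangleSum T T' ≅ (toKaroubi C).mapTriangle.obj S)}

section TriangleSum

variable {D : Type*} [Category D] [Preadditive D] [HasBinaryBiproducts D] [HasShift D ℤ]

-- The objects of `triangleSum` and of `Triangle.rotate` are biproducts only up to unfolding,
-- which `simp` does not do; hence the compatibility goals below are first restated with `show`.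
noncomputable def triangleSumMapIso {T T' U U' : Triangle D} (e : T ≅ U) (e' : T' ≅ U') :
    triangleSum T T' ≅ triangleSum U U' :=
  Triangle.isoMk _ _
    (biprod.mapIso (Triangle.π₁.mapIso e) (Triangle.π₁.mapIso e'))
    (biprod.mapIso (Triangle.π₂.mapIso e) (Triangle.π₂.mapIso e'))
    (biprod.mapIso (Triangle.π₃.mapIso e) (Triangle.π₃.mapIso e'))
    (show biprod.map T.mor₁ T'.mor₁ ≫ biprod.map e.hom.hom₂ e'.hom.hom₂ =
        biprod.map e.hom.hom₁ e'.hom.hom₁ ≫ biprod.map U.mor₁ U'.mor₁ by ext <;> simp)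
    (show biprod.map T.mor₂ T'.mor₂ ≫ biprod.map e.hom.hom₃ e'.hom.hom₃ =
        biprod.map e.hom.hom₂ e'.hom.hom₂ ≫ biprod.map U.mor₂ U'.mor₂ by ext <;> simp)
    (show biprod.desc (T.mor₃ ≫ biprod.inl⟦(1 : ℤ)⟧') (T'.mor₃ ≫ biprod.inr⟦(1 : ℤ)⟧') ≫
          (biprod.map e.hom.hom₁ e'.hom.hom₁)⟦(1 : ℤ)⟧' =
        biprod.map e.hom.hom₃ e'.hom.hom₃ ≫
          biprod.desc (U.mor₃ ≫ biprod.inl⟦(1 : ℤ)⟧') (U'.mor₃ ≫ biprod.inr⟦(1 : ℤ)⟧') by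
      ext <;> simp [← Functor.map_comp, ← TriangleMorphism.comm₃_assoc])

attribute [local instance] preservesBinaryBiproducts_of_preservesBiproducts

variable [∀ n : ℤ, (shiftFunctor D n).Additive]

noncomputable def triangleSumRotateIso (T T' : Triangle D) :
    (triangleSum T T').rotate ≅ triangleSum T.rotate T'.rotate :=
  Triangle.isoMk _ _ (Iso.refl _) (Iso.refl _) ((shiftFunctor D (1 : ℤ)).mapBiprod _ _)
    ((Category.comp_id _).trans (Category.id_comp _).symm)
    (show biprod.desc (T.mor₃ ≫ biprod.inl⟦(1 : ℤ)⟧') (T'.mor₃ ≫ biprod.inr⟦(1 : ℤ)⟧') ≫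
        biprod.lift (biprod.fst⟦(1 : ℤ)⟧') (biprod.snd⟦(1 : ℤ)⟧') =
        𝟙 _ ≫ biprod.map T.mor₃ T'.mor₃ by
      ext <;> simp [← Functor.map_comp])
    (show (-(biprod.map T.mor₁ T'.mor₁)⟦(1 : ℤ)⟧') ≫ (𝟙 _)⟦(1 : ℤ)⟧' =
        biprod.lift (biprod.fst⟦(1 : ℤ)⟧') (biprod.snd⟦(1 : ℤ)⟧') ≫
          biprod.desc ((-T.mor₁⟦(1 : ℤ)⟧') ≫ biprod.inl⟦(1 : ℤ)⟧')
            ((-T'.mor₁⟦(1 : ℤ)⟧') ≫ biprod.inr⟦(1 : ℤ)⟧') by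
      rw [CategoryTheory.Functor.map_id, Category.comp_id, biprod.lift_desc, biprod.map_eq]
      simp only [Preadditive.neg_comp, Preadditive.comp_neg, ← Functor.map_comp, Functor.map_add,
        neg_add])

end TriangleSum

section

variable {C}

lemma rotate_mem_thetaTilde {T : Triangle (Karoubi C)} (hT : T ∈ thetaTilde C) :
    T.rotate ∈ thetaTilde C := by
  obtain ⟨T', S, hS, ⟨e⟩⟩ := hT
  exact ⟨T'.rotate, S.rotate, rot_of_distTriang S hS,
    ⟨(triangleSumRotateIso T T').symm ≪≫ (rotate _).mapIso e ≪≫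
      (toKaroubi C).mapTriangleRotateIso.app S⟩⟩

lemma mem_thetaTilde_of_rotate_mem {T : Triangle (Karoubi C)} (hT : T.rotate ∈ thetaTilde C) :
    T ∈ thetaTilde C := by
  obtain ⟨T', S, hS, ⟨e⟩⟩ := hT
  have e' : (triangleSum T T'.invRotate).rotate ≅ (toKaroubi C).mapTriangle.obj S :=
    triangleSumRotateIso T T'.invRotate ≪≫
      triangleSumMapIso (Iso.refl _) ((triangleRotation _).counitIso.app T') ≪≫ e
  exact ⟨T'.invRotate, S.invRotate, inv_rot_of_distTriang S hS,
    ⟨(triangleRotation _).unitIso.app _ ≪≫ (invRotate _).mapIso e' ≪≫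
      (toKaroubi C).mapTriangleInvRotateIso.app S⟩⟩

end

/-- A triangle of `Karoubi C` belongs to `Θ̃` if and only if its rotation belongs to `Θ̃`. -/
theorem stmt11 (T : Triangle (Karoubi C)) :
    T ∈ thetaTilde C ↔ T.rotate ∈ thetaTilde C :=
  ⟨rotate_mem_thetaTilde, mem_thetaTilde_of_rotate_mem⟩
end

section
/- For every morphism u : X → Y in the idempotent completion Karoubi C, there exist an object Z of Karoubi C and morphisms v : Y → Z and w : Z → X⟦1⟧ such that the triangle (X, Y, Z; u, v, w) belongs to the class Θ̃. -/
open CategoryTheory CategoryTheory.Limits CategoryTheory.Pretriangulated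
  CategoryTheory.Idempotents ZeroObject

variable (C : Type*) [Category C] [Preadditive C] [HasZeroObject C] [HasFiniteBiproducts C]
  [HasShift C ℤ] [∀ n : ℤ, (shiftFunctor C n).Additive] [Pretriangulated C]

variable {C}

variable (C)

/-!
Complete `u.f : X.X ⟶ Y.X` to a distinguished triangle `X.X ⟶ Y.X ⟶ Z₀ ⟶ X.X⟦1⟧` of `C`. The
idempotents `X.p` and `Y.p` extend to an endomorphism `φ` of this triangle. Since `φ² - φ` vanishes
on the first two objects of a distinguished triangle, it squares to zero, so `3φ² - 2φ³` is an
idempotent endomorphism of the triangle which still restricts to `X.p` and `Y.p`. Its components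
`(X.p, Y.p, e)` and their complements `𝟙 - X.p, 𝟙 - Y.p, 𝟙 - e` split the image of the triangle in
`Karoubi C` as the direct sum of the triangle on `X, Y, (Z₀, e)` and a complementary triangle.
-/

section TriangleSum

variable {D : Type*} [Category D] [Preadditive D] [HasBinaryBiproducts D]

@[simps!]
noncomputable def biprodIsoOfTotal {A B P : D} {i : A ⟶ P} {j : B ⟶ P} {p : P ⟶ A} {q : P ⟶ B}
    (hip : i ≫ p = 𝟙 A) (hjq : j ≫ q = 𝟙 B) (hiq : i ≫ q = 0) (hjp : j ≫ p = 0)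
    (total : p ≫ i + q ≫ j = 𝟙 P) : A ⊞ B ≅ P :=
  (biprod.uniqueUpToIso A B (isBinaryBilimitOfTotal ⟨P, p, q, i, j, hip, hiq, hjp, hjq⟩ total)).symm

variable [HasShift D ℤ] [∀ n : ℤ, (shiftFunctor D n).Additive]

noncomputable def triangleSumIsoOfTotal {T T' : Triangle D} (b : BinaryBicone T T')
    (hb : b.fst ≫ b.inl + b.snd ≫ b.inr = 𝟙 b.pt) : triangleSum T T' ≅ b.pt :=
  Triangle.isoMk _ _
    (biprodIsoOfTotal (i := b.inl.hom₁) (j := b.inr.hom₁) (p := b.fst.hom₁) (q := b.snd.hom₁)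
      congr($(b.inl_fst).hom₁) congr($(b.inr_snd).hom₁) congr($(b.inl_snd).hom₁)
      congr($(b.inr_fst).hom₁) congr($(hb).hom₁))
    (biprodIsoOfTotal (i := b.inl.hom₂) (j := b.inr.hom₂) (p := b.fst.hom₂) (q := b.snd.hom₂)
      congr($(b.inl_fst).hom₂) congr($(b.inr_snd).hom₂) congr($(b.inl_snd).hom₂)
      congr($(b.inr_fst).hom₂) congr($(hb).hom₂))
    (biprodIsoOfTotal (i := b.inl.hom₃) (j := b.inr.hom₃) (p := b.fst.hom₃) (q := b.snd.hom₃)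
      congr($(b.inl_fst).hom₃) congr($(b.inr_snd).hom₃) congr($(b.inl_snd).hom₃)
      congr($(b.inr_fst).hom₃) congr($(hb).hom₃))
    (by apply biprod.hom_ext' <;> dsimp [triangleSum, Triangle.mk] <;> simp)
    (by apply biprod.hom_ext' <;> dsimp [triangleSum, Triangle.mk] <;> simp)
    (by apply biprod.hom_ext' <;> dsimp [triangleSum, Triangle.mk] <;> simp [← Functor.map_comp])

end TriangleSum

/-- `a + (a² - a)(1 - 2a) = 3a² - 2a³` is the classical lift of an idempotent modulo a square-zero
ideal. -/
theorem isIdempotentElem_add_mul_one_sub_two_mul {R : Type*} [Ring R] {a : R}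
    (h : (a * a - a) * (a * a - a) = 0) : IsIdempotentElem (a + (a * a - a) * (1 - 2 * a)) := by
  have key : (a + (a * a - a) * (1 - 2 * a)) * (a + (a * a - a) * (1 - 2 * a)) =
      (a + (a * a - a) * (1 - 2 * a)) + (a * a - a) * (a * a - a) * (4 * (a * a - a) - 3) := by
    noncomm_ring
  rw [IsIdempotentElem, key, h, zero_mul, add_zero]

namespace CategoryTheory.Pretriangulated

variable {D : Type*} [Category D] [Preadditive D] [HasZeroObject D] [HasShift D ℤ]
  [∀ n : ℤ, (shiftFunctor D n).Additive] [Pretriangulated D]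

theorem comp_self_eq_zero_of_hom₁_eq_zero_of_hom₂_eq_zero {S : Triangle D}
    (hS : S ∈ distTriang D) (ψ : S ⟶ S) (h₁ : ψ.hom₁ = 0) (h₂ : ψ.hom₂ = 0) : ψ ≫ ψ = 0 := by
  obtain ⟨s, hs⟩ := Triangle.yoneda_exact₃ S hS ψ.hom₃ (by rw [ψ.comm₂, h₂, zero_comp])
  have hψ₃ : ψ.hom₃ ≫ S.mor₃ = 0 := by rw [← ψ.comm₃, h₁, Functor.map_zero, comp_zero]
  ext
  · simp [h₁]
  · simp [h₂]
  · rw [comp_hom₃, Triangle.zero_hom₃]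
    nth_rw 2 [hs]
    rw [reassoc_of% hψ₃, zero_comp]

theorem exists_idem_hom₃_of_distTriang {S : Triangle D} (hS : S ∈ distTriang D)
    {e₁ : S.obj₁ ⟶ S.obj₁} {e₂ : S.obj₂ ⟶ S.obj₂} (he₁ : e₁ ≫ e₁ = e₁) (he₂ : e₂ ≫ e₂ = e₂)
    (comm : S.mor₁ ≫ e₂ = e₁ ≫ S.mor₁) :
    ∃ e₃ : S.obj₃ ⟶ S.obj₃, e₃ ≫ e₃ = e₃ ∧ S.mor₂ ≫ e₃ = e₂ ≫ S.mor₂ ∧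
      S.mor₃ ≫ e₁⟦(1 : ℤ)⟧' = e₃ ≫ S.mor₃ := by
  let φ : End S := completeDistinguishedTriangleMorphism S S hS hS e₁ e₂ comm
  let ψ : End S := φ * φ - φ
  have hψ₁ : ψ.hom₁ = 0 := by change e₁ ≫ e₁ - e₁ = 0; rw [he₁, sub_self]
  have hψ₂ : ψ.hom₂ = 0 := by change e₂ ≫ e₂ - e₂ = 0; rw [he₂, sub_self]
  let E : End S := φ + ψ * (1 - 2 * φ)
  have hE : IsIdempotentElem E := isIdempotentElem_add_mul_one_sub_two_mul
    (comp_self_eq_zero_of_hom₁_eq_zero_of_hom₂_eq_zero hS ψ hψ₁ hψ₂)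
  have hE₁ : E.hom₁ = e₁ := by
    change e₁ + (1 - 2 * φ).hom₁ ≫ ψ.hom₁ = e₁; rw [hψ₁, comp_zero, add_zero]
  have hE₂ : E.hom₂ = e₂ := by
    change e₂ + (1 - 2 * φ).hom₂ ≫ ψ.hom₂ = e₂; rw [hψ₂, comp_zero, add_zero]
  refine ⟨E.hom₃, congrArg TriangleMorphism.hom₃ hE, ?_, ?_⟩
  · rw [E.comm₂, hE₂]
  · rw [← E.comm₃, hE₁]

end CategoryTheory.Pretriangulated

namespace CategoryTheory.Idempotents.Karoubi

variable {𝒞 : Type*} [Category 𝒞] [Preadditive 𝒞]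

theorem decompId_i_comp_complement_decompId_p (P : Karoubi 𝒞) :
    P.decompId_i ≫ P.complement.decompId_p = 0 :=
  Karoubi.hom_ext _ _ (by
    change P.p ≫ (𝟙 P.X - P.p) = 0
    rw [Preadditive.comp_sub, Category.comp_id, P.idem, sub_self])

theorem complement_decompId_i_comp_decompId_p (P : Karoubi 𝒞) :
    P.complement.decompId_i ≫ P.decompId_p = 0 :=
  Karoubi.hom_ext _ _ (by
    change (𝟙 P.X - P.p) ≫ P.p = 0
    rw [Preadditive.sub_comp, Category.id_comp, P.idem, sub_self])

theorem decompId_p_comp_decompId_i_add (P : Karoubi 𝒞) :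
    (P.decompId_p ≫ P.decompId_i : (toKaroubi 𝒞).obj P.X ⟶ (toKaroubi 𝒞).obj P.X) +
      (P.complement.decompId_p ≫ P.complement.decompId_i :
        (toKaroubi 𝒞).obj P.X ⟶ (toKaroubi 𝒞).obj P.X) = 𝟙 _ :=
  Karoubi.hom_ext _ _ (by
    change P.p ≫ P.p + (𝟙 P.X - P.p) ≫ (𝟙 P.X - P.p) = 𝟙 P.X
    simp [Preadditive.sub_comp, Preadditive.comp_sub])

theorem comp_complement_p {P Q : Karoubi 𝒞} {f : P.X ⟶ Q.X} (hf : f ≫ Q.p = P.p ≫ f) :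
    f ≫ Q.complement.p = P.complement.p ≫ f := by
  change f ≫ (𝟙 Q.X - Q.p) = (𝟙 P.X - P.p) ≫ f
  rw [Preadditive.comp_sub, Preadditive.sub_comp, hf, Category.comp_id, Category.id_comp]

theorem comp_shift_complement_p [HasShift 𝒞 ℤ] [∀ n : ℤ, (shiftFunctor 𝒞 n).Additive]
    {P Q : Karoubi 𝒞} {h : Q.X ⟶ P.X⟦(1 : ℤ)⟧} (hh : h ≫ P.p⟦(1 : ℤ)⟧' = Q.p ≫ h) :
    h ≫ P.complement.p⟦(1 : ℤ)⟧' = Q.complement.p ≫ h := by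
  change h ≫ (𝟙 P.X - P.p)⟦(1 : ℤ)⟧' = (𝟙 Q.X - Q.p) ≫ h
  rw [Functor.map_sub, CategoryTheory.Functor.map_id, Preadditive.comp_sub, Preadditive.sub_comp,
    hh, Category.comp_id, Category.id_comp]

variable [HasShift 𝒞 ℤ] {P₁ P₂ P₃ : Karoubi 𝒞} {f : P₁.X ⟶ P₂.X} {g : P₂.X ⟶ P₃.X}
  {h : P₃.X ⟶ P₁.X⟦(1 : ℤ)⟧}

noncomputable def imageTriangle (hf : f ≫ P₂.p = P₁.p ≫ f) (hg : g ≫ P₃.p = P₂.p ≫ g)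
    (hh : h ≫ P₁.p⟦(1 : ℤ)⟧' = P₃.p ≫ h) : Triangle (Karoubi 𝒞) :=
  Triangle.mk (⟨P₁.p ≫ f, by simp [hf]⟩ : P₁ ⟶ P₂) (⟨P₂.p ≫ g, by simp [hg]⟩ : P₂ ⟶ P₃)
    (⟨P₃.p ≫ h, by
      change P₃.p ≫ (P₃.p ≫ h) ≫ P₁.p⟦(1 : ℤ)⟧' = _
      simp only [Category.assoc, hh, Karoubi.idem_assoc]
      rfl⟩ : P₃ ⟶ P₁⟦(1 : ℤ)⟧)

noncomputable def imageTriangleπ (hf : f ≫ P₂.p = P₁.p ≫ f) (hg : g ≫ P₃.p = P₂.p ≫ g)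
    (hh : h ≫ P₁.p⟦(1 : ℤ)⟧' = P₃.p ≫ h) :
    (toKaroubi 𝒞).mapTriangle.obj (Triangle.mk f g h) ⟶ imageTriangle hf hg hh :=
  Triangle.homMk _ _ P₁.decompId_p P₂.decompId_p P₃.decompId_p
    (Karoubi.hom_ext _ _ (by change f ≫ P₂.p = P₁.p ≫ P₁.p ≫ f; simp [hf]))
    (Karoubi.hom_ext _ _ (by change g ≫ P₃.p = P₂.p ≫ P₂.p ≫ g; simp [hg]))
    (Karoubi.hom_ext _ _ (by
      change (h ≫ 𝟙 _) ≫ P₁.p⟦(1 : ℤ)⟧' = P₃.p ≫ P₃.p ≫ h; simp [hh]))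

noncomputable def imageTriangleι (hf : f ≫ P₂.p = P₁.p ≫ f) (hg : g ≫ P₃.p = P₂.p ≫ g)
    (hh : h ≫ P₁.p⟦(1 : ℤ)⟧' = P₃.p ≫ h) :
    imageTriangle hf hg hh ⟶ (toKaroubi 𝒞).mapTriangle.obj (Triangle.mk f g h) :=
  Triangle.homMk _ _ P₁.decompId_i P₂.decompId_i P₃.decompId_i
    (Karoubi.hom_ext _ _ (by change (P₁.p ≫ f) ≫ P₂.p = P₁.p ≫ f; simp [hf]))
    (Karoubi.hom_ext _ _ (by change (P₂.p ≫ g) ≫ P₃.p = P₂.p ≫ g; simp [hg]))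
    (Karoubi.hom_ext _ _ (by
      change (P₃.p ≫ h) ≫ P₁.p⟦(1 : ℤ)⟧' = P₃.p ≫ h ≫ 𝟙 _; simp [hh]))

variable [∀ n : ℤ, (shiftFunctor 𝒞 n).Additive]

noncomputable def imageTriangleBicone (hf : f ≫ P₂.p = P₁.p ≫ f) (hg : g ≫ P₃.p = P₂.p ≫ g)
    (hh : h ≫ P₁.p⟦(1 : ℤ)⟧' = P₃.p ≫ h) :
    BinaryBicone (imageTriangle hf hg hh) (imageTriangle (P₁ := P₁.complement)
      (P₂ := P₂.complement) (P₃ := P₃.complement) (f := f) (g := g) (h := h)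
      (comp_complement_p hf) (comp_complement_p hg) (comp_shift_complement_p hh)) where
  pt := (toKaroubi 𝒞).mapTriangle.obj (Triangle.mk f g h)
  fst := imageTriangleπ hf hg hh
  snd := imageTriangleπ (P₁ := P₁.complement) (P₂ := P₂.complement) (P₃ := P₃.complement)
    (f := f) (g := g) (h := h) _ _ _
  inl := imageTriangleι hf hg hh
  inr := imageTriangleι (P₁ := P₁.complement) (P₂ := P₂.complement) (P₃ := P₃.complement)
    (f := f) (g := g) (h := h) _ _ _
  inl_fst := Triangle.hom_ext _ _ P₁.decompId.symm P₂.decompId.symm P₃.decompId.symm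
  inl_snd := Triangle.hom_ext _ _ P₁.decompId_i_comp_complement_decompId_p
    P₂.decompId_i_comp_complement_decompId_p P₃.decompId_i_comp_complement_decompId_p
  inr_fst := Triangle.hom_ext _ _ P₁.complement_decompId_i_comp_decompId_p
    P₂.complement_decompId_i_comp_decompId_p P₃.complement_decompId_i_comp_decompId_p
  inr_snd := Triangle.hom_ext _ _ P₁.complement.decompId.symm P₂.complement.decompId.symm
    P₃.complement.decompId.symm

theorem imageTriangleBicone_total (hf : f ≫ P₂.p = P₁.p ≫ f) (hg : g ≫ P₃.p = P₂.p ≫ g)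
    (hh : h ≫ P₁.p⟦(1 : ℤ)⟧' = P₃.p ≫ h) :
    (imageTriangleBicone hf hg hh).fst ≫ (imageTriangleBicone hf hg hh).inl +
      (imageTriangleBicone hf hg hh).snd ≫ (imageTriangleBicone hf hg hh).inr = 𝟙 _ :=
  Triangle.hom_ext _ _ P₁.decompId_p_comp_decompId_i_add P₂.decompId_p_comp_decompId_i_add
    P₃.decompId_p_comp_decompId_i_add

variable {C} in
theorem imageTriangle_mem_thetaTilde {P₁ P₂ P₃ : Karoubi C} {f : P₁.X ⟶ P₂.X} {g : P₂.X ⟶ P₃.X}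
    {h : P₃.X ⟶ P₁.X⟦(1 : ℤ)⟧} (hf : f ≫ P₂.p = P₁.p ≫ f) (hg : g ≫ P₃.p = P₂.p ≫ g)
    (hh : h ≫ P₁.p⟦(1 : ℤ)⟧' = P₃.p ≫ h) (hS : Triangle.mk f g h ∈ distTriang C) :
    imageTriangle hf hg hh ∈ thetaTilde C :=
  ⟨_, _, hS, ⟨triangleSumIsoOfTotal _ (imageTriangleBicone_total hf hg hh)⟩⟩

end CategoryTheory.Idempotents.Karoubi

/-- Every morphism of `Karoubi C` fits into a triangle belonging to the class `Θ̃`. -/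
theorem stmt13 {X Y : Karoubi C} (u : X ⟶ Y) :
    ∃ (Z : Karoubi C) (v : Y ⟶ Z) (w : Z ⟶ X⟦(1:ℤ)⟧),
      Triangle.mk u v w ∈ thetaTilde C := by
  obtain ⟨Z₀, g, h, hS⟩ := distinguished_cocone_triangle u.f
  have hu : u.f ≫ Y.p = X.p ≫ u.f := by rw [Karoubi.comp_p, Karoubi.p_comp]
  obtain ⟨e, he, hg, hh⟩ : ∃ e : Z₀ ⟶ Z₀, e ≫ e = e ∧ g ≫ e = Y.p ≫ g ∧
      h ≫ X.p⟦(1 : ℤ)⟧' = e ≫ h :=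
    exists_idem_hom₃_of_distTriang hS X.idem Y.idem hu
  let Z : Karoubi C := ⟨Z₀, e, he⟩
  let T := Karoubi.imageTriangle (P₃ := Z) hu hg hh
  have hT : T.mor₁ = u := Karoubi.hom_ext _ _ (Karoubi.p_comp u)
  refine ⟨Z, T.mor₂, T.mor₃, ?_⟩
  rw [← hT]
  exact Karoubi.imageTriangle_mem_thetaTilde hu hg hh hS
end

section
/- Universal property: let D be an idempotent complete pretriangulated category whose class of distinguished triangles is closed under direct summands of triangles. Let G : Karoubi C → D be an additive functor equipped with a natural isomorphism G(X⟦1⟧) ≅ (G X)⟦1⟧ commuting with the shifts, and suppose that the composite functor toKaroubi ⋙ G sends every distinguished triangle of C to a distinguished triangle of D (using the given natural isomorphism on the third map). Then G sends every triangle in the class Θ̃ to a distinguished triangle of D; that is, G is a triangulated functor from (Karoubi C, Θ̃) to D. -/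
open CategoryTheory CategoryTheory.Limits CategoryTheory.Pretriangulated
  CategoryTheory.Idempotents ZeroObject

variable (C : Type*) [Category C] [Preadditive C] [HasZeroObject C] [HasFiniteBiproducts C]
  [HasShift C ℤ] [∀ n : ℤ, (shiftFunctor C n).Additive] [Pretriangulated C]

variable {C}

variable (C)

/-! Additive functors preserve binary biproducts and `G` commutes with the shift, so
`G (T ⊕ T') ≅ G T ⊕ G T'` as triangles. For `T` in `Θ̃`, the left side is isomorphic to the
image of a distinguished triangle of `C`, hence distinguished, and `G T` is a direct summand
of it. -/

namespace CategoryTheory.Functor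

variable {E D : Type*} [Category E] [Category D] [HasZeroMorphisms E] [HasZeroMorphisms D]
  [HasBinaryBiproducts E] (G : E ⥤ D) [G.PreservesZeroMorphisms] [PreservesBinaryBiproducts G]

lemma mapBiprod_hom_naturality {X Y X' Y' : E} (f : X ⟶ X') (g : Y ⟶ Y') :
    G.map (biprod.map f g) ≫ (G.mapBiprod X' Y').hom =
      (G.mapBiprod X Y).hom ≫ biprod.map (G.map f) (G.map g) := by
  ext <;> simp only [Category.assoc, mapBiprod_hom, biprod.lift_fst, biprod.lift_snd,
    biprod.map_fst, biprod.map_snd, biprod.lift_fst_assoc, biprod.lift_snd_assoc, ← G.map_comp]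

lemma map_inl_mapBiprod_hom (X Y : E) :
    G.map biprod.inl ≫ (G.mapBiprod X Y).hom = biprod.inl := by
  rw [mapBiprod_hom]
  ext <;> simp [← G.map_comp]

lemma map_inr_mapBiprod_hom (X Y : E) :
    G.map biprod.inr ≫ (G.mapBiprod X Y).hom = biprod.inr := by
  rw [mapBiprod_hom]
  ext <;> simp [← G.map_comp]

lemma map_desc_shift_mapBiprod_hom [HasShift E ℤ] [HasShift D ℤ] [G.CommShift ℤ] {X Y Z W : E}
    (f : Z ⟶ X⟦(1 : ℤ)⟧) (g : W ⟶ Y⟦(1 : ℤ)⟧) :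
    (G.map (biprod.desc (f ≫ (biprod.inl : X ⟶ X ⊞ Y)⟦(1 : ℤ)⟧')
        (g ≫ (biprod.inr : Y ⟶ X ⊞ Y)⟦(1 : ℤ)⟧')) ≫ (G.commShiftIso (1 : ℤ)).hom.app (X ⊞ Y)) ≫
      (G.mapBiprod X Y).hom⟦(1 : ℤ)⟧' =
    (G.mapBiprod Z W).hom ≫
      biprod.desc ((G.map f ≫ (G.commShiftIso (1 : ℤ)).hom.app X) ≫
          (biprod.inl : G.obj X ⟶ G.obj X ⊞ G.obj Y)⟦(1 : ℤ)⟧')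
        ((G.map g ≫ (G.commShiftIso (1 : ℤ)).hom.app Y) ≫
          (biprod.inr : G.obj Y ⟶ G.obj X ⊞ G.obj Y)⟦(1 : ℤ)⟧') := by
  rw [← cancel_epi (G.mapBiprod Z W).inv, Iso.inv_hom_id_assoc, mapBiprod_inv]
  apply biprod.hom_ext'
  · simp only [biprod.inl_desc_assoc, biprod.inl_desc, Category.assoc, ← G.map_comp_assoc]
    simp only [G.map_comp, Category.assoc, commShiftIso_hom_naturality_assoc]
    rw [← Functor.map_comp, map_inl_mapBiprod_hom]
  · simp only [biprod.inr_desc_assoc, biprod.inr_desc, Category.assoc, ← G.map_comp_assoc]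
    simp only [G.map_comp, Category.assoc, commShiftIso_hom_naturality_assoc]
    rw [← Functor.map_comp, map_inr_mapBiprod_hom]

end CategoryTheory.Functor

/- The squares are stated separately above because `simp` cannot see through
`G.mapTriangle.obj`: the objects of the mapped triangles agree with `G.obj _` only up to
unfolding, and `exact` does that unfolding. -/
noncomputable def mapTriangleTriangleSumIso {E D : Type*} [Category E] [Preadditive E]
    [HasBinaryBiproducts E] [HasShift E ℤ] [Category D] [Preadditive D] [HasBinaryBiproducts D]
    [HasShift D ℤ] (G : E ⥤ D) [G.PreservesZeroMorphisms] [PreservesBinaryBiproducts G]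
    [G.CommShift ℤ] (T T' : Triangle E) :
    G.mapTriangle.obj (triangleSum T T') ≅
      triangleSum (G.mapTriangle.obj T) (G.mapTriangle.obj T') :=
  Triangle.isoMk _ _ (G.mapBiprod _ _) (G.mapBiprod _ _) (G.mapBiprod _ _)
    (G.mapBiprod_hom_naturality _ _) (G.mapBiprod_hom_naturality _ _)
    (G.map_desc_shift_mapBiprod_hom _ _)

/-- Universal property: let `D` be an idempotent complete pretriangulated category whose
distinguished triangles are closed under direct summands, and let `G : Karoubi C ⥤ D` be an
additive functor commuting with the shifts such that `toKaroubi C ⋙ G` sends distinguished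
triangles of `C` to distinguished triangles of `D`. Then `G` sends every triangle of the
class `Θ̃` to a distinguished triangle of `D`. -/
theorem stmt16 {D : Type*} [Category D] [Preadditive D] [HasZeroObject D]
    [HasBinaryBiproducts D] [HasShift D ℤ] [∀ n : ℤ, (shiftFunctor D n).Additive]
    [Pretriangulated D] [IsIdempotentComplete D]
    (hsummand : ∀ T T' : Triangle D, (triangleSum T T' ∈ distTriang D) → T ∈ distTriang D)
    (G : Karoubi C ⥤ D) [G.Additive] [G.CommShift ℤ]
    (himage : ∀ S : Triangle C, (S ∈ distTriang C) →
      G.mapTriangle.obj ((toKaroubi C).mapTriangle.obj S) ∈ distTriang D)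
    (T : Triangle (Karoubi C)) (hT : T ∈ thetaTilde C) :
    G.mapTriangle.obj T ∈ distTriang D := by
  obtain ⟨T', S, hS, ⟨e⟩⟩ := hT
  have : PreservesBinaryBiproducts G := preservesBinaryBiproducts_of_preservesBiproducts G
  have hsum : G.mapTriangle.obj (triangleSum T T') ∈ distTriang D :=
    isomorphic_distinguished _ (himage S hS) _ (G.mapTriangle.mapIso e)
  exact hsummand _ _ (isomorphic_distinguished _ hsum _ (mapTriangleTriangleSumIso G T T').symm)
end
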